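/- arXiv:1307.1915 — 2 statements merged into one kernel-verified Lean document; each statement's English description precedes it below -/
import Mathlib

section
/- Let Q be an instance of the FIFO stack-up problem in which every pallet of plts(Q) has at least two bins in the sequences of Q, and let p ≥ 1. Then there exists a processing of Q that uses at most p stack-up places if and only if the directed pathwidth of the sequence graph G_Q is at most p − 1. -/
/-- The configuration of the remaining queues after the bins in `removed`
have been removed from the fronts of the queues of `Q`. -/
def confAfter {B : Type} [DecidableEq B] (Q : List (List B)) (removed : List B) :
    List (List B) :=
  Q.map fun q => q.dropWhile fun b => decide (b ∈ removed)

/-- `ord` is the removal order of a processing of the instance `Q`: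
it is a permutation of all bins, and at every step the removed bin is the
first bin of one of the remaining sequences. -/
def IsProcessing {B : Type} [DecidableEq B] (Q : List (List B)) (ord : List B) : Prop :=
  ord.Perm Q.flatten ∧
  ∀ i (hi : i < ord.length),
    ∃ q ∈ confAfter Q (ord.take i), q.head? = some ord[i]

/-- The set of pallets that are open after the bins in `removed` have been removed:
some bin of the pallet has been removed and some bin of the pallet remains. -/
def openAfter {B P : Type} [DecidableEq B] (Q : List (List B)) (plt : B → P)
    (removed : List B) : Set P :=
  {t | (∃ b ∈ removed, plt b = t) ∧
       ∃ q ∈ confAfter Q removed, ∃ b ∈ q, plt b = t}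

/-- The processing `ord` of `Q` uses at most `p` stack-up places: in every
configuration during the processing at most `p` pallets are open. -/
def UsesAtMost {B P : Type} [DecidableEq B] (Q : List (List B)) (plt : B → P)
    (ord : List B) (p : ℕ) : Prop :=
  ∀ i ≤ ord.length, (openAfter Q plt (ord.take i)).ncard ≤ p

/-- The set of pallet labels of the instance `Q`. -/
def pltsOf {B P : Type} (Q : List (List B)) (plt : B → P) : Set P :=
  {t | ∃ q ∈ Q, ∃ b ∈ q, plt b = t}

/-- Every pallet of the instance has at least two bins in the sequences of `Q`. -/
def EveryPalletTwoBins {B P : Type} (Q : List (List B)) (plt : B → P) : Prop :=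
  ∀ t ∈ pltsOf Q plt, ∃ b₁ b₂, b₁ ≠ b₂ ∧ b₁ ∈ Q.flatten ∧ b₂ ∈ Q.flatten ∧
    plt b₁ = t ∧ plt b₂ = t

/-- The arc relation of the sequence graph `G_Q`: there is an arc `(u,v)` iff
`u ≠ v` and in some sequence of `Q` a bin with label `u` occurs at an earlier
position than a bin with label `v`. -/
def seqArc {B P : Type} (Q : List (List B)) (plt : B → P) (u v : P) : Prop :=
  u ≠ v ∧ ∃ q ∈ Q, ∃ i j : ℕ, i < j ∧
    (∃ b, q[i]? = some b ∧ plt b = u) ∧ (∃ b', q[j]? = some b' ∧ plt b' = v)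

/-- `X` is a directed path-decomposition of the digraph with vertex set `Vs`
and arc relation `A`. -/
def IsDPD {V : Type} (A : V → V → Prop) (Vs : Set V) (X : List (Set V)) : Prop :=
  (∀ C ∈ X, C ⊆ Vs) ∧
  (∀ v ∈ Vs, ∃ i, ∃ hi : i < X.length, v ∈ X[i]) ∧
  (∀ u v, A u v → ∃ i j, i ≤ j ∧ ∃ hi : i < X.length, ∃ hj : j < X.length,
      u ∈ X[i] ∧ v ∈ X[j]) ∧
  (∀ v i j l, i ≤ l → l ≤ j →
    ∀ hi : i < X.length, ∀ hj : j < X.length, ∀ hl : l < X.length,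
      v ∈ X[i] → v ∈ X[j] → v ∈ X[l])


/-- The directed pathwidth of the digraph with vertex set `Vs` and arc relation
`A`: the smallest `w` such that there is a directed path-decomposition all of
whose bags have at most `w + 1` elements (i.e. of width at most `w`). -/
noncomputable def dirPathwidth {V : Type} (A : V → V → Prop) (Vs : Set V) : ℕ :=
  sInf {w | ∃ X : List (Set V), IsDPD A Vs X ∧ ∀ C ∈ X, C.ncard ≤ w + 1}

/-!
With pairwise distinct bins, a removal order is a processing exactly when every queue is a
sublist of it; then the pallets open after `m` removals are those with a bin before and a bin
after position `m` of the order.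

A processing gives the decomposition whose `m`-th bag is the set of pallets open after `m`
removals. A pallet with two bins is open right before or right after the removal of each of its
bins, and a bin that precedes another in a queue is removed earlier, which places the bags of an
arc in the right order.

Conversely, from a decomposition give each bin `b` the stage: the largest first bag of a pallet
of a bin at or before `b` in its queue. An arc `(plt c, plt b)` puts the first bag of `plt c` no
later than some bag of `plt b`, so by the interval property `plt b` lies in the bag of its
stage. Stages grow along every queue, so removing the bins in order of stage is a processing,
and a pallet open before the removal of a bin `x` has bins of stage `≤` and `≥` that of `x`,
hence lies in the bag of that stage.
-/

theorem List.getElem_mem_take {α : Type*} {l : List α} {k m : ℕ} (hk : k < l.length)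
    (h : k < m) : l[k] ∈ l.take m :=
  List.mem_take_iff_getElem.2 ⟨k, by omega, rfl⟩

theorem List.getElem_mem_drop {α : Type*} {l : List α} {k m : ℕ} (hk : k < l.length)
    (h : m ≤ k) : l[k] ∈ l.drop m :=
  List.mem_drop_iff_getElem.2 ⟨k - m, by omega, by congr 1; omega⟩

theorem List.mem_take_succ {α : Type*} {l : List α} {m : ℕ} (hm : m < l.length) {a : α} :
    a ∈ l.take (m + 1) ↔ a ∈ l.take m ∨ a = l[m] := by
  rw [← List.take_concat_get' _ _ hm, List.mem_append, List.mem_singleton]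

theorem List.dropWhile_mem_append {α : Type*} [DecidableEq α] {R l₁ l₂ : List α}
    (h₁ : l₁ ⊆ R) (h₂ : ∀ a ∈ l₂, a ∉ R) :
    (l₁ ++ l₂).dropWhile (fun a => decide (a ∈ R)) = l₂ := by
  rw [List.dropWhile_append_of_pos fun a ha => decide_eq_true (h₁ ha)]
  cases l₂ with
  | nil => rfl
  | cons a l => exact List.dropWhile_cons_of_neg (by simpa using h₂ a List.mem_cons_self)

theorem List.head?_eq_of_sublist_cons {α : Type*} {l l' : List α} {a : α}
    (h : l.Sublist (a :: l')) (ha : a ∈ l) (ha' : a ∉ l') : l.head? = some a := by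
  rcases List.sublist_cons_iff.1 h with h | ⟨r, rfl, -⟩
  · exact absurd (h.subset ha) ha'
  · rfl

theorem List.eq_of_mem_of_nodup_flatten {α : Type*} {L : List (List α)} (hL : L.flatten.Nodup)
    {l l' : List α} (hl : l ∈ L) (hl' : l' ∈ L) {a : α} (ha : a ∈ l) (ha' : a ∈ l') :
    l = l' := by
  by_contra hne
  have : Std.Symm (α := List α) List.Disjoint := ⟨fun _ _ h => h.symm⟩
  exact (List.nodup_flatten.1 hL).2.forall hl hl' hne ha ha'

section Processing

variable {B : Type} [DecidableEq B] {Q : List (List B)} {ord : List B}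

theorem IsProcessing.exists_append_take (hnd : Q.flatten.Nodup) (h : IsProcessing Q ord)
    {m : ℕ} (hm : m ≤ ord.length) {q : List B} (hq : q ∈ Q) :
    ∃ q₁ q₂, q = q₁ ++ q₂ ∧ q₁.Sublist (ord.take m) ∧
      ∀ b ∈ q₂, b ∉ ord.take m := by
  induction m generalizing q with
  | zero => exact ⟨[], q, rfl, by simp, by simp⟩
  | succ m ih =>
    obtain ⟨_, hconf, hhead⟩ := h.2 m hm
    obtain ⟨q₀, hq₀, rfl⟩ := List.mem_map.1 hconf
    obtain ⟨a, c, rfl, ha, hc⟩ := ih (by omega) hq₀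
    rw [List.dropWhile_mem_append ha.subset hc] at hhead
    obtain ⟨c, rfl⟩ := List.head?_eq_some_iff.1 hhead
    by_cases hqq : q = a ++ ord[m] :: c
    · subst hqq
      have hnd₀ := (List.nodup_flatten.1 hnd).1 _ hq₀
      refine ⟨a ++ [ord[m]], c, by simp, ?_, fun b hb => ?_⟩
      · rw [← List.take_concat_get' _ _ hm]
        exact ha.append (List.Sublist.refl _)
      · rw [List.mem_take_succ hm]
        rintro (hb' | rfl)
        · exact hc b (List.mem_cons_of_mem _ hb) hb'
        · exact (List.nodup_cons.1 (List.nodup_append.1 hnd₀).2.1).1 hb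
    · obtain ⟨a', c', rfl, ha', hc'⟩ := ih (by omega) hq
      refine ⟨a', c', rfl, ha'.trans (List.take_sublist_take_left (by omega)), fun b hb => ?_⟩
      rw [List.mem_take_succ hm]
      rintro (hb' | rfl)
      · exact hc' b hb hb'
      · exact hqq (List.eq_of_mem_of_nodup_flatten hnd hq hq₀
          (List.mem_append_right _ hb) (by simp))

theorem IsProcessing.sublist (hnd : Q.flatten.Nodup) (h : IsProcessing Q ord) {q : List B}
    (hq : q ∈ Q) : q.Sublist ord := by
  obtain ⟨q₁, q₂, rfl, h₁, h₂⟩ := h.exists_append_take hnd le_rfl hq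
  rw [List.take_length] at h₁ h₂
  obtain rfl : q₂ = [] := List.eq_nil_iff_forall_not_mem.2 fun b hb =>
    h₂ b hb (h.1.mem_iff.2 (List.mem_flatten.2 ⟨_, hq, List.mem_append_right _ hb⟩))
  simpa using h₁

theorem List.Sublist.dropWhile_mem_take {q : List B} (hnd : ord.Nodup) (hq : q.Sublist ord)
    (m : ℕ) : (q.dropWhile (fun b => decide (b ∈ ord.take m))).Sublist (ord.drop m) ∧
      ∀ b ∈ q, b ∈ ord.drop m → b ∈ q.dropWhile (fun b => decide (b ∈ ord.take m)) := by
  rw [← List.take_append_drop m ord] at hq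
  obtain ⟨q₁, q₂, rfl, h₁, h₂⟩ := List.sublist_append_iff.1 hq
  have hdisj : ∀ b ∈ q₂, b ∉ ord.take m := fun b hb hb' =>
    List.disjoint_take_drop hnd le_rfl hb' (h₂.subset hb)
  rw [List.dropWhile_mem_append h₁.subset hdisj]
  refine ⟨h₂, fun b hb hbd => ?_⟩
  rcases List.mem_append.1 hb with hb | hb
  · exact absurd (h₁.subset hb) (List.disjoint_take_drop hnd le_rfl · hbd)
  · exact hb

theorem isProcessing_of_sublist (hnd : ord.Nodup) (hperm : ord.Perm Q.flatten)
    (hsub : ∀ q ∈ Q, q.Sublist ord) : IsProcessing Q ord := by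
  refine ⟨hperm, fun m hm => ?_⟩
  obtain ⟨q, hq, hmq⟩ := List.mem_flatten.1 (hperm.mem_iff.1 (List.getElem_mem hm))
  obtain ⟨hdrop, hmem⟩ := (hsub q hq).dropWhile_mem_take hnd m
  rw [List.drop_eq_getElem_cons hm] at hdrop hmem
  refine ⟨_, List.mem_map_of_mem hq, List.head?_eq_of_sublist_cons hdrop
    (hmem _ hmq List.mem_cons_self) ?_⟩
  have hdrop_nd := hnd.sublist (List.drop_sublist m ord)
  rw [List.drop_eq_getElem_cons hm] at hdrop_nd
  exact (List.nodup_cons.1 hdrop_nd).1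

theorem isProcessing_iff (hnd : Q.flatten.Nodup) :
    IsProcessing Q ord ↔ ord.Perm Q.flatten ∧ ∀ q ∈ Q, q.Sublist ord :=
  ⟨fun h => ⟨h.1, fun _ hq => h.sublist hnd hq⟩,
    fun h => isProcessing_of_sublist (h.1.nodup_iff.2 hnd) h.1 h.2⟩

theorem mem_confAfter_take (hnd : ord.Nodup) (hperm : ord.Perm Q.flatten)
    (hsub : ∀ q ∈ Q, q.Sublist ord) (m : ℕ) (b : B) :
    (∃ q ∈ confAfter Q (ord.take m), b ∈ q) ↔ b ∈ ord.drop m := by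
  constructor
  · rintro ⟨_, hq', hb⟩
    obtain ⟨q, hq, rfl⟩ := List.mem_map.1 hq'
    exact ((hsub q hq).dropWhile_mem_take hnd m).1.subset hb
  · intro hb
    obtain ⟨q, hq, hbq⟩ := List.mem_flatten.1 (hperm.mem_iff.1 (List.mem_of_mem_drop hb))
    exact ⟨_, List.mem_map_of_mem hq, ((hsub q hq).dropWhile_mem_take hnd m).2 b hbq hb⟩

end Processing

def openAt {B P : Type} (ord : List B) (plt : B → P) (m : ℕ) : Set P :=
  {t | (∃ b ∈ ord.take m, plt b = t) ∧ ∃ b ∈ ord.drop m, plt b = t}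

section OpenPallets

variable {B P : Type} {Q : List (List B)} {plt : B → P} {ord : List B}

theorem IsProcessing.openAfter_take [DecidableEq B] (hnd : Q.flatten.Nodup)
    (h : IsProcessing Q ord) (plt : B → P) (m : ℕ) :
    openAfter Q plt (ord.take m) = openAt ord plt m := by
  have hconf := mem_confAfter_take (h.1.nodup_iff.2 hnd) h.1 (fun _ hq => h.sublist hnd hq) m
  ext t
  refine and_congr_right fun _ => ⟨?_, ?_⟩
  · rintro ⟨q, hq, b, hb, rfl⟩
    exact ⟨b, (hconf b).1 ⟨q, hq, hb⟩, rfl⟩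
  · rintro ⟨b, hb, rfl⟩
    obtain ⟨q, hq, hbq⟩ := (hconf b).2 hb
    exact ⟨q, hq, b, hbq, rfl⟩

theorem mem_openAt_of_le_of_le {i j l : ℕ} {t : P} (hil : i ≤ l) (hlj : l ≤ j)
    (hi : t ∈ openAt ord plt i) (hj : t ∈ openAt ord plt j) : t ∈ openAt ord plt l :=
  ⟨hi.1.imp fun _ ⟨hb, hbt⟩ => ⟨(List.take_sublist_take_left hil).subset hb, hbt⟩,
    hj.2.imp fun _ ⟨hb, hbt⟩ => ⟨(List.drop_sublist_drop_left _ hlj).subset hb, hbt⟩⟩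

theorem exists_mem_openAt_of_ne {k : ℕ} (hk : k < ord.length) {c : B} (hc : c ∈ ord)
    (hne : c ≠ ord[k]) (hct : plt c = plt ord[k]) :
    ∃ m, k ≤ m ∧ m ≤ k + 1 ∧ plt ord[k] ∈ openAt ord plt m := by
  obtain ⟨k', hk', rfl⟩ := List.getElem_of_mem hc
  rcases Nat.lt_or_gt_of_ne (fun h : k' = k => hne (by simp [h])) with h | h
  · exact ⟨k, le_rfl, k.le_succ, ⟨_, List.getElem_mem_take hk' h, hct⟩,
      ⟨_, List.getElem_mem_drop hk le_rfl, rfl⟩⟩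
  · exact ⟨k + 1, k.le_succ, le_rfl, ⟨_, List.getElem_mem_take hk k.lt_succ_self, rfl⟩,
      ⟨_, List.getElem_mem_drop hk' h, hct⟩⟩

theorem mem_pltsOf_of_mem_flatten (plt : B → P) {b : B} (hb : b ∈ Q.flatten) :
    plt b ∈ pltsOf Q plt := by
  obtain ⟨q, hq, hbq⟩ := List.mem_flatten.1 hb
  exact ⟨q, hq, b, hbq, rfl⟩

theorem pltsOf_finite (Q : List (List B)) (plt : B → P) : (pltsOf Q plt).Finite :=
  (Q.flatten.finite_toSet.image plt).subset fun _ ⟨q, hq, b, hb, ht⟩ =>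
    ⟨b, List.mem_flatten.2 ⟨q, hq, hb⟩, ht⟩

theorem EveryPalletTwoBins.exists_ne (htwo : EveryPalletTwoBins Q plt) {b : B}
    (hb : b ∈ Q.flatten) : ∃ c ∈ Q.flatten, c ≠ b ∧ plt c = plt b := by
  obtain ⟨b₁, b₂, hne, hb₁, hb₂, h₁, h₂⟩ :=
    htwo _ (mem_pltsOf_of_mem_flatten plt hb)
  by_cases h : b₁ = b
  · exact ⟨b₂, hb₂, h ▸ hne.symm, h₂⟩
  · exact ⟨b₁, hb₁, h, h₁⟩

theorem exists_mem_openAt (hperm : ord.Perm Q.flatten) (htwo : EveryPalletTwoBins Q plt)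
    {k : ℕ} (hk : k < ord.length) :
    ∃ m, k ≤ m ∧ m ≤ k + 1 ∧ plt ord[k] ∈ openAt ord plt m := by
  obtain ⟨c, hc, hne, hct⟩ := htwo.exists_ne (hperm.mem_iff.1 (List.getElem_mem hk))
  exact exists_mem_openAt_of_ne hk (hperm.mem_iff.2 hc) hne hct

theorem List.Sublist.exists_getElem_lt {α : Type*} {l l' : List α} (h : l.Sublist l')
    {i j : ℕ} (hi : i < l.length) (hj : j < l.length) (hij : i < j) :
    ∃ i' j', ∃ (hi' : i' < l'.length) (hj' : j' < l'.length),
      i' < j' ∧ l'[i'] = l[i] ∧ l'[j'] = l[j] := by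
  obtain ⟨f, hf⟩ := List.sublist_iff_exists_fin_orderEmbedding_get_eq.1 h
  exact ⟨f ⟨i, hi⟩, f ⟨j, hj⟩, (f ⟨i, hi⟩).2, (f ⟨j, hj⟩).2, f.lt_iff_lt.2 hij,
    (hf ⟨i, hi⟩).symm, (hf ⟨j, hj⟩).symm⟩

theorem isDPD_openAt (hperm : ord.Perm Q.flatten) (hsub : ∀ q ∈ Q, q.Sublist ord)
    (htwo : EveryPalletTwoBins Q plt) :
    IsDPD (seqArc Q plt) (pltsOf Q plt) ((List.range (ord.length + 1)).map (openAt ord plt)) := by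
  refine ⟨?bags, ?cover, ?arcs, ?interval⟩
  case bags =>
    simp only [List.mem_map, List.mem_range]
    rintro _ ⟨m, -, rfl⟩ _ ⟨⟨b, hb, rfl⟩, -⟩
    exact mem_pltsOf_of_mem_flatten plt (hperm.mem_iff.1 (List.mem_of_mem_take hb))
  case cover =>
    rintro t ⟨q, hq, b, hbq, rfl⟩
    obtain ⟨k, hk, rfl⟩ :=
      List.getElem_of_mem (hperm.mem_iff.2 (List.mem_flatten.2 ⟨q, hq, hbq⟩))
    obtain ⟨m, -, hm, ht⟩ := exists_mem_openAt hperm htwo hk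
    exact ⟨m, by simp; omega, by simpa using ht⟩
  case arcs =>
    rintro u v ⟨-, q, hq, i, j, hij, ⟨b, hb, rfl⟩, ⟨b', hb', rfl⟩⟩
    obtain ⟨hi, rfl⟩ := List.getElem?_eq_some_iff.1 hb
    obtain ⟨hj, rfl⟩ := List.getElem?_eq_some_iff.1 hb'
    obtain ⟨k, k', hk, hk', hkk', hkb, hkb'⟩ := (hsub q hq).exists_getElem_lt hi hj hij
    obtain ⟨m, -, hm, hu⟩ := exists_mem_openAt hperm htwo hk
    obtain ⟨m', hm', hm'', hv⟩ := exists_mem_openAt hperm htwo hk'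
    rw [hkb] at hu
    rw [hkb'] at hv
    exact ⟨m, m', by omega, by simp; omega, by simp; omega, by simpa using hu,
      by simpa using hv⟩
  case interval =>
    intro t i j l hil hlj hi hj hl hti htj
    simp only [List.getElem_map, List.getElem_range] at hti htj ⊢
    exact mem_openAt_of_le_of_le hil hlj hti htj

end OpenPallets

theorem isDPD_singleton {V : Type} {A : V → V → Prop} {Vs : Set V}
    (hA : ∀ u v, A u v → u ∈ Vs ∧ v ∈ Vs) : IsDPD A Vs [Vs] := by
  refine ⟨by simp, fun v hv => ⟨0, by simp, by simpa⟩, fun u v huv => ?_, ?_⟩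
  · exact ⟨0, 0, le_rfl, by simp, by simp, by simpa using (hA u v huv).1,
      by simpa using (hA u v huv).2⟩
  · intro v i j l _ _ _ _ hl h _
    obtain rfl : l = 0 := by simpa using hl
    simpa using h

theorem exists_isDPD_of_dirPathwidth_le {V : Type} {A : V → V → Prop} {Vs : Set V}
    (hA : ∀ u v, A u v → u ∈ Vs ∧ v ∈ Vs) {w : ℕ} (h : dirPathwidth A Vs ≤ w) :
    ∃ X, IsDPD A Vs X ∧ ∀ C ∈ X, C.ncard ≤ w + 1 := by
  obtain ⟨X, hX, hXw⟩ := Nat.sInf_mem (⟨Vs.ncard, [Vs], isDPD_singleton hA, by simp⟩ :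
    {w | ∃ X : List (Set V), IsDPD A Vs X ∧ ∀ C ∈ X, C.ncard ≤ w + 1}.Nonempty)
  exact ⟨X, hX, fun C hC => (hXw C hC).trans (by unfold dirPathwidth at h; omega)⟩

theorem seqArc_mem_pltsOf {B P : Type} {Q : List (List B)} {plt : B → P} (u v : P)
    (h : seqArc Q plt u v) : u ∈ pltsOf Q plt ∧ v ∈ pltsOf Q plt := by
  obtain ⟨-, q, hq, i, j, -, ⟨b, hb, rfl⟩, ⟨b', hb', rfl⟩⟩ := h
  exact ⟨⟨q, hq, b, List.mem_of_getElem? hb, rfl⟩,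
    ⟨q, hq, b', List.mem_of_getElem? hb', rfl⟩⟩

theorem ncard_openAt_le {B P : Type} {A : P → P → Prop} {Vs : Set P} {X : List (Set P)}
    {plt : B → P} {ord : List B} {key : B → ℕ} {p : ℕ} (hX : IsDPD A Vs X) (hVs : Vs.Finite)
    (hw : ∀ C ∈ X, C.ncard ≤ p) (hsorted : ord.Pairwise (fun a b => key a ≤ key b))
    (hkey : ∀ b ∈ ord, ∃ h : key b < X.length, plt b ∈ X[key b]) (m : ℕ) :
    (openAt ord plt m).ncard ≤ p := by
  cases hdrop : ord.drop m with
  | nil =>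
    have : openAt ord plt m = ∅ := by ext t; simp [openAt, hdrop]
    simp [this]
  | cons x rest =>
    rw [← List.take_append_drop m ord, hdrop, List.pairwise_append, List.pairwise_cons]
      at hsorted
    obtain ⟨-, ⟨hxrest, -⟩, htake⟩ := hsorted
    obtain ⟨hx, hxbag⟩ := hkey x (List.mem_of_mem_drop (hdrop ▸ List.mem_cons_self))
    have hsubset : openAt ord plt m ⊆ X[key x] := by
      rintro t ⟨⟨c, hc, rfl⟩, d, hd, hdt⟩
      obtain ⟨hc', hcbag⟩ := hkey c (List.mem_of_mem_take hc)
      obtain ⟨hd', hdbag⟩ := hkey d (List.mem_of_mem_drop hd)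
      have hxd : key x ≤ key d := by
        rw [hdrop] at hd
        rcases List.mem_cons.1 hd with rfl | hd
        exacts [le_rfl, hxrest d hd]
      exact hX.2.2.2 _ _ _ _ (htake c hc x List.mem_cons_self) hxd hc' hd' hx hcbag
        (hdt ▸ hdbag)
    exact (Set.ncard_le_ncard hsubset (hVs.subset (hX.1 _ (List.getElem_mem hx)))).trans
      (hw _ (List.getElem_mem hx))

section Stages

variable {B P : Type} {Q : List (List B)} {plt : B → P} {X : List (Set P)}

noncomputable def firstBag (X : List (Set P)) (t : P) : ℕ :=
  sInf {i | ∃ h : i < X.length, t ∈ X[i]}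

theorem firstBag_le {t : P} {i : ℕ} (hi : i < X.length) (ht : t ∈ X[i]) : firstBag X t ≤ i :=
  Nat.sInf_le ⟨hi, ht⟩

theorem firstBag_le_length (t : P) : firstBag X t ≤ X.length := by
  rcases Set.eq_empty_or_nonempty {i | ∃ h : i < X.length, t ∈ X[i]} with h | ⟨i, hi, ht⟩
  · simp [firstBag, h]
  · exact (firstBag_le hi ht).trans hi.le

theorem exists_mem_firstBag {t : P} (h : ∃ i, ∃ hi : i < X.length, t ∈ X[i]) :
    ∃ h : firstBag X t < X.length, t ∈ X[firstBag X t] :=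
  Nat.sInf_mem (s := {i | ∃ h : i < X.length, t ∈ X[i]}) (h.imp fun _ => id)

def QueuePrec (Q : List (List B)) (c b : B) : Prop :=
  ∃ q ∈ Q, ∃ i j, ∃ (hi : i < q.length) (hj : j < q.length),
    i ≤ j ∧ q[i] = c ∧ q[j] = b

theorem QueuePrec.refl {b : B} (hb : b ∈ Q.flatten) : QueuePrec Q b b := by
  obtain ⟨q, hq, hbq⟩ := List.mem_flatten.1 hb
  obtain ⟨i, hi, rfl⟩ := List.getElem_of_mem hbq
  exact ⟨q, hq, i, i, hi, hi, le_rfl, rfl, rfl⟩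

theorem QueuePrec.mem_flatten_left {c b : B} (h : QueuePrec Q c b) : c ∈ Q.flatten := by
  obtain ⟨q, hq, i, -, hi, -, -, rfl, -⟩ := h
  exact List.mem_flatten.2 ⟨q, hq, List.getElem_mem hi⟩

theorem QueuePrec.trans (hnd : Q.flatten.Nodup) {d c b : B} (hdc : QueuePrec Q d c)
    (hcb : QueuePrec Q c b) : QueuePrec Q d b := by
  obtain ⟨q, hq, i, j, hi, hj, hij, rfl, rfl⟩ := hdc
  obtain ⟨q', hq', i', j', hi', hj', hij', hc, rfl⟩ := hcb
  obtain rfl := List.eq_of_mem_of_nodup_flatten hnd hq hq' (List.getElem_mem hj)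
    (hc ▸ List.getElem_mem hi')
  obtain rfl := ((List.nodup_flatten.1 hnd).1 q hq).getElem_inj_iff.1 hc
  exact ⟨q, hq, i, j', hi, hj', hij.trans hij', rfl, rfl⟩

theorem QueuePrec.exists_bag (hX : IsDPD (seqArc Q plt) (pltsOf Q plt) X) {c b : B}
    (h : QueuePrec Q c b) :
    ∃ j, ∃ hj : j < X.length, firstBag X (plt c) ≤ j ∧ plt b ∈ X[j] := by
  by_cases hcb : plt c = plt b
  · obtain ⟨q, hq, -, j, -, hj, -, -, rfl⟩ := h
    have hb := List.mem_flatten.2 ⟨q, hq, List.getElem_mem hj⟩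
    obtain ⟨hF, hFmem⟩ := exists_mem_firstBag (hX.2.1 _ (mem_pltsOf_of_mem_flatten plt hb))
    exact ⟨_, hF, hcb ▸ le_rfl, hFmem⟩
  · obtain ⟨q, hq, i, j, hi, hj, hij, rfl, rfl⟩ := h
    have hlt : i < j := lt_of_le_of_ne hij fun h => hcb (by simp [h])
    obtain ⟨i', j', hij', hi', hj', hu, hv⟩ := hX.2.2.1 _ _ ⟨hcb, q, hq, i, j, hlt,
      ⟨_, List.getElem?_eq_getElem hi, rfl⟩, ⟨_, List.getElem?_eq_getElem hj, rfl⟩⟩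
    exact ⟨j', hj', (firstBag_le hi' hu).trans hij', hv⟩

noncomputable def stage (Q : List (List B)) (plt : B → P) (X : List (Set P)) (b : B) : ℕ :=
  sSup ((fun c => firstBag X (plt c)) '' {c | QueuePrec Q c b})

theorem bddAbove_stage (b : B) :
    BddAbove ((fun c => firstBag X (plt c)) '' {c | QueuePrec Q c b}) :=
  ⟨X.length, by rintro _ ⟨c, -, rfl⟩; exact firstBag_le_length _⟩

theorem firstBag_le_stage {b : B} (hb : b ∈ Q.flatten) :
    firstBag X (plt b) ≤ stage Q plt X b :=
  le_csSup (bddAbove_stage b) ⟨b, QueuePrec.refl hb, rfl⟩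

theorem stage_mono (hnd : Q.flatten.Nodup) {c b : B} (h : QueuePrec Q c b) :
    stage Q plt X c ≤ stage Q plt X b :=
  csSup_le_csSup (bddAbove_stage b) ⟨_, c, QueuePrec.refl h.mem_flatten_left, rfl⟩
    (Set.image_mono fun _ hd => QueuePrec.trans hnd hd h)

theorem exists_mem_stage (hX : IsDPD (seqArc Q plt) (pltsOf Q plt) X) {b : B}
    (hb : b ∈ Q.flatten) : ∃ h : stage Q plt X b < X.length, plt b ∈ X[stage Q plt X b] := by
  obtain ⟨c, hcb, hc⟩ := Nat.sSup_mem
    (Set.Nonempty.image _ ⟨b, QueuePrec.refl hb⟩) (bddAbove_stage b)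
  obtain ⟨j, hj, hcj, hbj⟩ := hcb.exists_bag hX
  obtain ⟨hF, hFmem⟩ := exists_mem_firstBag (hX.2.1 _ (mem_pltsOf_of_mem_flatten plt hb))
  have hsj : stage Q plt X b ≤ j := by rw [stage, ← hc]; exact hcj
  exact ⟨by omega, hX.2.2.2 _ _ _ _ (firstBag_le_stage hb) hsj hF hj _ hFmem hbj⟩

theorem exists_processing_of_isDPD [DecidableEq B] (hnd : Q.flatten.Nodup)
    (hX : IsDPD (seqArc Q plt) (pltsOf Q plt) X) {p : ℕ} (hw : ∀ C ∈ X, C.ncard ≤ p) :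
    ∃ ord, IsProcessing Q ord ∧ UsesAtMost Q plt ord p := by
  let le : B → B → Bool := fun a b => decide (stage Q plt X a ≤ stage Q plt X b)
  have htrans : ∀ a b c, le a b → le b c → le a c := by
    simp only [le, decide_eq_true_eq]; omega
  have htotal : ∀ a b, (le a b || le b a) := by
    simp only [le, Bool.or_eq_true, decide_eq_true_eq]; omega
  let ord := Q.flatten.mergeSort le
  have hperm : ord.Perm Q.flatten := List.mergeSort_perm _ _
  have hqsorted (q : List B) (hq : q ∈ Q) : q.Pairwise (fun a b => le a b) :=
    List.pairwise_iff_getElem.2 fun i j hi hj hij =>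
      decide_eq_true (stage_mono hnd ⟨q, hq, i, j, hi, hj, hij.le, rfl, rfl⟩)
  have hproc : IsProcessing Q ord := (isProcessing_iff hnd).2 ⟨hperm, fun q hq =>
    List.sublist_mergeSort htrans htotal (hqsorted q hq) (List.sublist_flatten_of_mem hq)⟩
  refine ⟨ord, hproc, fun m _ => ?_⟩
  rw [hproc.openAfter_take hnd]
  refine ncard_openAt_le hX (pltsOf_finite Q plt) hw ?_
    (fun b hb => exists_mem_stage hX (hperm.mem_iff.1 hb)) m
  simpa [le] using List.pairwise_mergeSort htrans htotal Q.flatten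

end Stages

/-- If every pallet of `Q` has at least two bins and `p ≥ 1`,
then there is a processing of `Q` with at most `p` stack-up places if and only
if the directed pathwidth of the sequence graph `G_Q` is at most `p - 1`. -/
theorem processing_iff_dirPathwidth {B P : Type} [DecidableEq B]
    (Q : List (List B)) (plt : B → P) (hnd : Q.flatten.Nodup)
    (htwo : EveryPalletTwoBins Q plt) (p : ℕ) (hp : 1 ≤ p) :
    (∃ ord : List B, IsProcessing Q ord ∧ UsesAtMost Q plt ord p) ↔
      dirPathwidth (seqArc Q plt) (pltsOf Q plt) ≤ p - 1 := by
  constructor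
  · rintro ⟨ord, hproc, huse⟩
    refine Nat.sInf_le ⟨_, isDPD_openAt hproc.1 (fun q hq => hproc.sublist hnd hq) htwo, ?_⟩
    simp only [List.mem_map, List.mem_range]
    rintro _ ⟨m, hm, rfl⟩
    have := huse m (by omega)
    rw [hproc.openAfter_take hnd] at this
    omega
  · intro h
    obtain ⟨X, hX, hw⟩ := exists_isDPD_of_dirPathwidth_le seqArc_mem_pltsOf h
    exact exists_processing_of_isDPD hnd hX fun C hC => (hw C hC).trans (by omega)
end

section
/- Let G = (V,E) be a finite digraph without self-loops in which every vertex has at least one incoming arc and at least one outgoing arc, and let p ≥ 1. Then there is a directed path-decomposition of G of width at most p − 1 if and only if there is a processing of the queue system Q_G that uses at most p stack-up places. -/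
/-- The queue system `Q_G` of a digraph `G = (V, A)`: for each arc `(u,v)` a
sequence of two distinct bins, the first labeled with pallet `u`, the second
labeled with pallet `v`. -/
noncomputable def queueSystem {V : Type} [Fintype V] [DecidableEq V]
    (A : V → V → Prop) [DecidableRel A] : List (List (V × V × Bool)) :=
  ((Finset.univ.filter (fun e : V × V => A e.1 e.2)).toList).map
    fun e => [(e.1, e.2, false), (e.1, e.2, true)]

/-- The pallet label of a bin of the queue system: the second bin of a queue
for arc `(u,v)` is labeled `v`, the first one `u`. -/
def queuePlt {V : Type} (b : V × V × Bool) : V :=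
  if b.2.2 then b.2.1 else b.1

/-!
A processing of `Q_G` is recorded by its removal order `ord`, in which the first bin of every
queue precedes the second. After `i` removals the open pallets are exactly the labels shared by
a bin at a position `< i` and a bin at a position `≥ i`. Hence every vertex is open during an
interval of times, and it is open at some time because it labels a bin of an in-arc and a bin of
an out-arc. So the sets of open pallets at the successive times form a directed
path-decomposition whose bags have at most `p` elements.

Conversely, if the vertex `v` lies exactly in the bags `f v, …, l v`, remove the bins in
increasing order of the key `2 f u` for the first bin of the queue of an arc `(u, v)` and
`2 l v + 1` for its second bin. Since `f u ≤ l v` this is a processing, and every pallet that is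
open right after the removal of a bin of key `k` lies in the bag `k / 2`.
-/
lemma List.Nodup.getElem_mem_take_iff {α : Type*} {l : List α} (hl : l.Nodup) {i m : ℕ}
    (hm : m < l.length) : l[m] ∈ l.take i ↔ m < i := by
  rw [List.mem_take_iff_getElem]
  constructor
  · rintro ⟨j, hj, hjm⟩
    rw [hl.getElem_inj_iff] at hjm
    omega
  · exact fun hmi => ⟨m, by omega, rfl⟩

section SortedByKey

variable {α β : Type*} [Preorder β] {κ : α → β} {l : List α}

lemma List.Pairwise.key_le_of_le (h : l.Pairwise fun x y => κ x ≤ κ y) {i j : ℕ}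
    (hi : i < l.length) (hj : j < l.length) (hij : i ≤ j) : κ l[i] ≤ κ l[j] := by
  rcases hij.eq_or_lt with rfl | hij
  · exact le_rfl
  · exact List.pairwise_iff_getElem.1 h i j hi hj hij

lemma List.Pairwise.lt_of_key_lt (h : l.Pairwise fun x y => κ x ≤ κ y) {i j : ℕ}
    (hi : i < l.length) (hj : j < l.length) (hκ : κ l[i] < κ l[j]) : i < j :=
  lt_of_not_ge fun hji => (h.key_le_of_le hj hi hji).not_gt hκ

end SortedByKey

lemma openAfter_nil {B P : Type} [DecidableEq B] (Q : List (List B)) (plt : B → P) :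
    openAfter Q plt [] = ∅ := by
  simp [openAfter]

lemma isDPD_map_range {V : Type} {A : V → V → Prop} {B : ℕ → Set V} {n : ℕ}
    (hcov : ∀ v, ∃ i < n, v ∈ B i)
    (harc : ∀ u v, A u v → ∃ i j, i ≤ j ∧ j < n ∧ u ∈ B i ∧ v ∈ B j)
    (hint : ∀ v i j l, i ≤ l → l ≤ j → v ∈ B i → v ∈ B j → v ∈ B l) :
    IsDPD A Set.univ ((List.range n).map B) := by
  refine ⟨fun _ _ => Set.subset_univ _, fun v _ => ?_, fun u v huv => ?_,
    fun v i j l hil hlj _ _ _ => ?_⟩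
  · obtain ⟨i, hi, hv⟩ := hcov v
    exact ⟨i, by simpa using hi, by simpa using hv⟩
  · obtain ⟨i, j, hij, hj, hu, hv⟩ := harc u v huv
    exact ⟨i, j, hij, by simpa using hij.trans_lt hj, by simpa using hj, by simpa using hu, by simpa using hv⟩
  · simpa using hint v i j l hil hlj

lemma IsDPD.exists_bag_intervals {V : Type} {A : V → V → Prop} {X : List (Set V)}
    (hX : IsDPD A Set.univ X) :
    ∃ f l : V → ℕ, (∀ v, f v ≤ l v ∧ l v < X.length) ∧ (∀ u v, A u v → f u ≤ l v) ∧
      ∀ v c (hc : c < X.length), f v ≤ c → c ≤ l v → v ∈ X[c] := by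
  classical
  obtain ⟨-, hcov, harc, hint⟩ := hX
  let P (v : V) (i : ℕ) : Prop := ∃ hi : i < X.length, v ∈ X[i]
  have hP (v : V) : ∃ i, P v i := hcov v trivial
  have hfirst (v : V) : P v (Nat.find (hP v)) := Nat.find_spec (hP v)
  have hlast (v : V) : P v (Nat.findGreatest (P v) X.length) :=
    Nat.findGreatest_spec (hfirst v).1.le (hfirst v)
  refine ⟨fun v => Nat.find (hP v), fun v => Nat.findGreatest (P v) X.length,
    fun v => ⟨Nat.le_findGreatest (hfirst v).1.le (hfirst v), (hlast v).1⟩, ?_, ?_⟩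
  · rintro u v huv
    obtain ⟨i, j, hij, hi, hj, hu, hv⟩ := harc u v huv
    exact (Nat.find_min' _ ⟨hi, hu⟩).trans (hij.trans (Nat.le_findGreatest hj.le ⟨hj, hv⟩))
  · intro v c hc hfc hcl
    exact hint v _ _ c hfc hcl (hfirst v).1 (hlast v).1 hc (hfirst v).2 (hlast v).2

section QueueSystem

variable {V : Type} [Fintype V] [DecidableEq V] {A : V → V → Prop} [DecidableRel A]

lemma mem_queueSystem {q : List (V × V × Bool)} :
    q ∈ queueSystem A ↔ ∃ u v, A u v ∧ q = [(u, v, false), (u, v, true)] := by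
  simp [queueSystem, eq_comm]

lemma mem_flatten_queueSystem {b : V × V × Bool} :
    b ∈ (queueSystem A).flatten ↔ A b.1 b.2.1 := by
  obtain ⟨u, v, s⟩ := b
  simp only [List.mem_flatten, mem_queueSystem]
  constructor
  · rintro ⟨_, ⟨u', v', huv, rfl⟩, hb⟩
    cases s <;> simp_all
  · exact fun huv => ⟨_, ⟨u, v, huv, rfl⟩, by cases s <;> simp⟩

lemma nodup_flatten_queueSystem : (queueSystem A).flatten.Nodup := by
  rw [List.nodup_flatten]
  constructor
  · intro l hl
    obtain ⟨u, v, _, rfl⟩ := mem_queueSystem.1 hl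
    simp
  · refine List.Pairwise.map _ ?_ (Finset.nodup_toList _)
    rintro ⟨u, v⟩ ⟨u', v'⟩ hne b hb hb'
    simp only [List.mem_cons, List.not_mem_nil, or_false] at hb hb'
    rcases hb with rfl | rfl <;> rcases hb' with h | h <;> simp_all

def IsQueuePrefix (R : List (V × V × Bool)) : Prop :=
  ∀ u v, (u, v, true) ∈ R → (u, v, false) ∈ R

lemma mem_confAfter_queueSystem {R : List (V × V × Bool)} (hR : IsQueuePrefix R)
    {b : V × V × Bool} :
    (∃ q ∈ confAfter (queueSystem A) R, b ∈ q) ↔ A b.1 b.2.1 ∧ b ∉ R := by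
  simp only [confAfter, List.mem_map, mem_queueSystem]
  constructor
  · rintro ⟨_, ⟨_, ⟨u, v, huv, rfl⟩, rfl⟩, hb⟩
    have := hR u v
    by_cases h₁ : (u, v, false) ∈ R <;> by_cases h₂ : (u, v, true) ∈ R <;>
      simp [h₁, h₂] at hb <;> aesop
  · obtain ⟨u, v, s⟩ := b
    rintro ⟨huv, hb⟩
    refine ⟨_, ⟨_, ⟨u, v, huv, rfl⟩, rfl⟩, ?_⟩
    have := hR u v
    cases s <;> by_cases h₁ : (u, v, false) ∈ R <;> simp_all

lemma mem_openAfter_queueSystem {R : List (V × V × Bool)} (hR : IsQueuePrefix R) {t : V} :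
    t ∈ openAfter (queueSystem A) queuePlt R ↔
      (∃ b ∈ R, queuePlt b = t) ∧ ∃ b, A b.1 b.2.1 ∧ b ∉ R ∧ queuePlt b = t := by
  refine and_congr_right fun _ => ⟨?_, ?_⟩
  · rintro ⟨q, hq, b, hb, hbt⟩
    obtain ⟨hbA, hbR⟩ := (mem_confAfter_queueSystem hR).1 ⟨q, hq, hb⟩
    exact ⟨b, hbA, hbR, hbt⟩
  · rintro ⟨b, hbA, hbR, hbt⟩
    obtain ⟨q, hq, hb⟩ := (mem_confAfter_queueSystem hR).2 ⟨hbA, hbR⟩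
    exact ⟨q, hq, b, hb, hbt⟩

end QueueSystem

namespace IsProcessing

variable {V : Type} [Fintype V] [DecidableEq V] {A : V → V → Prop} [DecidableRel A]
  {ord : List (V × V × Bool)}

lemma mem_iff (h : IsProcessing (queueSystem A) ord) {b : V × V × Bool} :
    b ∈ ord ↔ A b.1 b.2.1 :=
  h.1.mem_iff.trans mem_flatten_queueSystem

lemma nodup (h : IsProcessing (queueSystem A) ord) : ord.Nodup :=
  h.1.nodup_iff.2 nodup_flatten_queueSystem

lemma exists_getElem_eq (h : IsProcessing (queueSystem A) ord) {b : V × V × Bool}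
    (hb : A b.1 b.2.1) : ∃ m, ∃ hm : m < ord.length, ord[m] = b :=
  List.mem_iff_getElem.1 (h.mem_iff.2 hb)

lemma first_mem_take (h : IsProcessing (queueSystem A) ord) {m : ℕ} (hm : m < ord.length)
    {u v : V} (he : ord[m] = (u, v, true)) : (u, v, false) ∈ ord.take m := by
  obtain ⟨_, hq, hhead⟩ := h.2 m hm
  simp only [confAfter, List.mem_map, mem_queueSystem] at hq
  obtain ⟨_, ⟨u', v', -, rfl⟩, rfl⟩ := hq
  rw [he] at hhead
  by_cases h₁ : (u', v', false) ∈ ord.take m <;> by_cases h₂ : (u', v', true) ∈ ord.take m <;>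
    simp_all

lemma lt_of_getElem_eq (h : IsProcessing (queueSystem A) ord) {a b : ℕ} (ha : a < ord.length)
    (hb : b < ord.length) {u v : V} (hea : ord[a] = (u, v, false))
    (heb : ord[b] = (u, v, true)) : a < b := by
  have := h.first_mem_take hb heb
  rwa [← hea, h.nodup.getElem_mem_take_iff] at this

lemma isQueuePrefix_take (h : IsProcessing (queueSystem A) ord) (i : ℕ) :
    IsQueuePrefix (ord.take i) := by
  intro u v hmem
  obtain ⟨m, hm, he⟩ := List.mem_iff_getElem.1 (List.mem_of_mem_take hmem)
  rw [← he, h.nodup.getElem_mem_take_iff] at hmem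
  exact List.take_subset_take_left _ hmem.le (h.first_mem_take hm he)

lemma mem_openAfter_take_iff (h : IsProcessing (queueSystem A) ord) {i : ℕ} {t : V} :
    t ∈ openAfter (queueSystem A) queuePlt (ord.take i) ↔
      ∃ m m', ∃ (hm : m < ord.length) (hm' : m' < ord.length),
        m < i ∧ i ≤ m' ∧ queuePlt ord[m] = t ∧ queuePlt ord[m'] = t := by
  rw [mem_openAfter_queueSystem (h.isQueuePrefix_take i)]
  constructor
  · rintro ⟨⟨b, hb, rfl⟩, b', hb', hb'i, hb't⟩
    obtain ⟨m, hm, rfl⟩ := List.mem_iff_getElem.1 (List.mem_of_mem_take hb)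
    obtain ⟨m', hm', rfl⟩ := h.exists_getElem_eq hb'
    rw [h.nodup.getElem_mem_take_iff] at hb hb'i
    exact ⟨m, m', hm, hm', hb, by omega, rfl, hb't⟩
  · rintro ⟨m, m', hm, hm', hmi, him', rfl, hm't⟩
    refine ⟨⟨ord[m], (h.nodup.getElem_mem_take_iff hm).2 hmi, rfl⟩,
      ord[m'], h.mem_iff.1 (List.getElem_mem _), ?_, hm't⟩
    rw [h.nodup.getElem_mem_take_iff]
    omega

lemma mem_openAfter_take_of_ne (h : IsProcessing (queueSystem A) ord) {m m' : ℕ}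
    (hm : m < ord.length) (hm' : m' < ord.length) (hne : m ≠ m') {t : V}
    (ht : queuePlt ord[m] = t) (ht' : queuePlt ord[m'] = t) {i : ℕ}
    (hi : min m m' < i) (hi' : i ≤ max m m') :
    t ∈ openAfter (queueSystem A) queuePlt (ord.take i) := by
  rw [h.mem_openAfter_take_iff]
  rcases hne.lt_or_gt with hlt | hlt
  · exact ⟨m, m', hm, hm', by omega, by omega, ht, ht'⟩
  · exact ⟨m', m, hm', hm, by omega, by omega, ht', ht⟩

lemma isDPD_openAfter (h : IsProcessing (queueSystem A) ord)
    (hin : ∀ v, ∃ w, A w v) (hout : ∀ v, ∃ w, A v w) :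
    IsDPD A Set.univ ((List.range (ord.length + 1)).map fun i =>
      openAfter (queueSystem A) queuePlt (ord.take i)) := by
  apply isDPD_map_range
  · intro v
    obtain ⟨w, hw⟩ := hout v
    obtain ⟨w', hw'⟩ := hin v
    obtain ⟨m, hm, he⟩ := h.exists_getElem_eq (b := (v, w, false)) hw
    obtain ⟨m', hm', he'⟩ := h.exists_getElem_eq (b := (w', v, true)) hw'
    have hne : m ≠ m' := by rintro rfl; simp [he] at he'
    exact ⟨min m m' + 1, by omega, h.mem_openAfter_take_of_ne hm hm' hne
      (by simp [he, queuePlt]) (by simp [he', queuePlt]) (by omega) (by omega)⟩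
  · intro u v huv
    obtain ⟨w, hw⟩ := hin u
    obtain ⟨y, hy⟩ := hout v
    obtain ⟨a, ha, hea⟩ := h.exists_getElem_eq (b := (u, v, false)) huv
    obtain ⟨a', ha', hea'⟩ := h.exists_getElem_eq (b := (w, u, true)) hw
    obtain ⟨b, hb, heb⟩ := h.exists_getElem_eq (b := (u, v, true)) huv
    obtain ⟨b', hb', heb'⟩ := h.exists_getElem_eq (b := (v, y, false)) hy
    have hab := h.lt_of_getElem_eq ha hb hea heb
    have haa' : a ≠ a' := by rintro rfl; simp [hea] at hea'
    have hbb' : b ≠ b' := by rintro rfl; simp [heb] at heb'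
    exact ⟨min a a' + 1, max b b', by omega, by omega,
      h.mem_openAfter_take_of_ne ha ha' haa' (by simp [hea, queuePlt])
        (by simp [hea', queuePlt]) (by omega) (by omega),
      h.mem_openAfter_take_of_ne hb hb' hbb' (by simp [heb, queuePlt])
        (by simp [heb', queuePlt]) (by omega) le_rfl⟩
  · intro t i j l hil hlj hti htj
    rw [h.mem_openAfter_take_iff] at hti htj ⊢
    obtain ⟨m, -, hm, -, hmi, -, hmt, -⟩ := hti
    obtain ⟨-, m', -, hm', -, hjm', -, hm't⟩ := htj
    exact ⟨m, m', hm, hm', by omega, by omega, hmt, hm't⟩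

end IsProcessing

section ProcessingOfDecomposition

variable {V : Type} [Fintype V] [DecidableEq V] {A : V → V → Prop} [DecidableRel A]

lemma isProcessing_of_pairwise {κ : V × V × Bool → ℕ} {ord : List (V × V × Bool)}
    (hperm : ord.Perm (queueSystem A).flatten) (hsorted : ord.Pairwise fun x y => κ x ≤ κ y)
    (hκ : ∀ u v, A u v → κ (u, v, false) < κ (u, v, true)) :
    IsProcessing (queueSystem A) ord := by
  have hnd : ord.Nodup := hperm.nodup_iff.2 nodup_flatten_queueSystem
  refine ⟨hperm, fun i hi => ?_⟩
  have hnotin : ord[i] ∉ ord.take i := by rw [hnd.getElem_mem_take_iff]; omega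
  obtain ⟨⟨u, v, s⟩, hb⟩ : ∃ b, ord[i] = b := ⟨_, rfl⟩
  have huv : A u v := mem_flatten_queueSystem.1 (hperm.subset (hb ▸ List.getElem_mem hi))
  rw [hb] at hnotin ⊢
  refine ⟨_, List.mem_map_of_mem (mem_queueSystem.2 ⟨u, v, huv, rfl⟩), ?_⟩
  cases s
  · simp [hnotin]
  · obtain ⟨a, ha, hea⟩ := List.mem_iff_getElem.1
      (hperm.mem_iff.2 (mem_flatten_queueSystem.2 huv : (u, v, false) ∈ _))
    have hai : a < i := hsorted.lt_of_key_lt ha hi (by rw [hea, hb]; exact hκ u v huv)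
    have hfirst : (u, v, false) ∈ ord.take i := hea ▸ (hnd.getElem_mem_take_iff ha).2 hai
    simp [hfirst, hnotin]

lemma exists_processing_of_isDPD_s6 {p : ℕ} {X : List (Set V)} (hX : IsDPD A Set.univ X)
    (hXp : ∀ C ∈ X, C.ncard ≤ p) :
    ∃ ord, IsProcessing (queueSystem A) ord ∧ UsesAtMost (queueSystem A) queuePlt ord p := by
  obtain ⟨f, l, hfl, harc, hbag⟩ := hX.exists_bag_intervals
  let κ : V × V × Bool → ℕ := fun b => if b.2.2 then 2 * l b.2.1 + 1 else 2 * f b.1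
  have hκ (b : V × V × Bool) : f (queuePlt b) ≤ κ b / 2 ∧ κ b / 2 ≤ l (queuePlt b) := by
    have := hfl (queuePlt b)
    obtain ⟨u, v, _ | _⟩ := b <;>
      simp only [κ, queuePlt, Bool.false_eq_true, if_true, if_false] at this ⊢ <;> omega
  let r : V × V × Bool → V × V × Bool → Prop := fun x y => κ x ≤ κ y
  have : Std.Total r := ⟨fun _ _ => le_total _ _⟩
  have : IsTrans _ r := ⟨fun _ _ _ => le_trans⟩
  let ord := (queueSystem A).flatten.insertionSort r
  have hsorted : ord.Pairwise r := List.pairwise_insertionSort _ _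
  have hproc : IsProcessing (queueSystem A) ord :=
    isProcessing_of_pairwise (List.perm_insertionSort _ _) hsorted fun u v huv => by
      have := harc u v huv
      simp only [κ, Bool.false_eq_true, if_true, if_false]
      omega
  refine ⟨ord, hproc, fun i hi => ?_⟩
  rcases i with _ | i
  · simp [openAfter_nil]
  have hi : i < ord.length := by omega
  have hc : κ ord[i] / 2 < X.length := (hκ _).2.trans_lt (hfl _).2
  have hsub : openAfter (queueSystem A) queuePlt (ord.take (i + 1)) ⊆ X[κ ord[i] / 2] := by
    intro t ht
    obtain ⟨m, m', hm, hm', hmi, him', rfl, hm't⟩ := hproc.mem_openAfter_take_iff.1 ht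
    have h₁ := hsorted.key_le_of_le hm hi (by omega)
    have h₂ := hsorted.key_le_of_le hi hm' (by omega)
    have h₃ := hκ ord[m]
    have h₄ := hκ ord[m']
    rw [hm't] at h₄
    exact hbag _ _ hc (by omega) (by omega)
  exact (Set.ncard_le_ncard hsub (Set.toFinite _)).trans (hXp _ (List.getElem_mem hc))

end ProcessingOfDecomposition

theorem dpd_iff_processing_queueSystem_general {V : Type} [Fintype V] [DecidableEq V]
    (A : V → V → Prop) [DecidableRel A]
    (hin : ∀ v, ∃ w, A w v) (hout : ∀ v, ∃ w, A v w)
    (p : ℕ) :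
    (∃ X : List (Set V), IsDPD A (Set.univ : Set V) X ∧ ∀ C ∈ X, C.ncard ≤ p) ↔
    (∃ ord : List (V × V × Bool), IsProcessing (queueSystem A) ord ∧
      UsesAtMost (queueSystem A) queuePlt ord p) := by
  constructor
  · rintro ⟨X, hX, hXp⟩
    exact exists_processing_of_isDPD_s6 hX hXp
  · rintro ⟨ord, hproc, huse⟩
    refine ⟨_, hproc.isDPD_openAfter hin hout, fun C hC => ?_⟩
    obtain ⟨i, hi, rfl⟩ := List.mem_map.1 hC
    exact huse i (by simpa [Nat.lt_succ_iff] using hi)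

/-- Let `G = (V,A)` be a finite digraph without self-loops in
which every vertex has at least one incoming and at least one outgoing arc,
and let `p ≥ 1`. Then there is a directed path-decomposition of `G` of width
at most `p - 1` (every bag has at most `p` elements) if and only if there is a
processing of the queue system `Q_G` that uses at most `p` stack-up places. -/
theorem dpd_iff_processing_queueSystem {V : Type} [Fintype V] [DecidableEq V]
    (A : V → V → Prop) [DecidableRel A]
    (hloop : ∀ v, ¬ A v v)
    (hin : ∀ v, ∃ w, A w v) (hout : ∀ v, ∃ w, A v w)
    (p : ℕ) (hp : 1 ≤ p) :
    (∃ X : List (Set V), IsDPD A (Set.univ : Set V) X ∧ ∀ C ∈ X, C.ncard ≤ p) ↔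
    (∃ ord : List (V × V × Bool), IsProcessing (queueSystem A) ord ∧
      UsesAtMost (queueSystem A) queuePlt ord p) :=
  dpd_iff_processing_queueSystem_general A hin hout p
end
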